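/- Theorem 5, (I) ⟹ (II): Let u ∈ C¹(Ω;ℝᴺ) and O ⋐ Ω. If u minimizes E_∞(·, O) among all v ∈ C¹ with v = u on ∂O (equivalently E_∞(u+ψ, O) ≥ E_∞(u,O) for every ψ ∈ C¹₀(Ō;ℝᴺ)), then for every ψ ∈ C¹₀(Ō;ℝᴺ): max over Argmax{H(·,u,Du) : Ō} of [ H_P(·,u,Du) : Dψ + H_η(·,u,Du) · ψ ] ≥ 0. -/

import Mathlib

/-- The supremal functional `E_∞(v, O) = max_{closure O} H(·, v, Dv)`. -/
noncomputable def Einf {n N : ℕ}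
    (H : EuclideanSpace ℝ (Fin n) → EuclideanSpace ℝ (Fin N) →
      (EuclideanSpace ℝ (Fin n) →L[ℝ] EuclideanSpace ℝ (Fin N)) → ℝ)
    (O : Set (EuclideanSpace ℝ (Fin n)))
    (v : EuclideanSpace ℝ (Fin n) → EuclideanSpace ℝ (Fin N)) : ℝ :=
  sSup ((fun x => H x (v x) (fderiv ℝ v x)) '' closure O)

/-- The set of maximizers of `h` over `closure O`. -/
def argmaxSet {n : ℕ} (h : EuclideanSpace ℝ (Fin n) → ℝ)
    (O : Set (EuclideanSpace ℝ (Fin n))) : Set (EuclideanSpace ℝ (Fin n)) :=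
  {x ∈ closure O | ∀ y ∈ closure O, h y ≤ h x}

/-- The first variation `H_P(·,u,Du) : Dψ + H_η(·,u,Du) ⋅ ψ`. -/
noncomputable def firstVar {n N : ℕ}
    (H : EuclideanSpace ℝ (Fin n) → EuclideanSpace ℝ (Fin N) →
      (EuclideanSpace ℝ (Fin n) →L[ℝ] EuclideanSpace ℝ (Fin N)) → ℝ)
    (u ψ : EuclideanSpace ℝ (Fin n) → EuclideanSpace ℝ (Fin N))
    (x : EuclideanSpace ℝ (Fin n)) : ℝ :=
  fderiv ℝ (fun p : EuclideanSpace ℝ (Fin N) ×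
      (EuclideanSpace ℝ (Fin n) →L[ℝ] EuclideanSpace ℝ (Fin N)) => H x p.1 p.2)
    (u x, fderiv ℝ u x) (ψ x, fderiv ℝ ψ x)

set_option maxHeartbeats 1000000 in
open ContinuousLinearMap Set in
/-- Theorem 5, (I) ⟹ (II): if `u` minimizes `E_∞(·,O)` with respect to
all variations `ψ ∈ C¹₀(closure O; ℝᴺ)` (i.e. `ψ` is `C¹` on `ℝⁿ` and vanishes on `∂O`),
then for every such `ψ`,
`max_{Argmax{H(·,u,Du) : closure O}} [H_P(·,u,Du):Dψ + H_η(·,u,Du)⋅ψ] ≥ 0`. -/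
theorem minimizer_implies_nonneg_max_firstVar
    (n N : ℕ) (Ω O : Set (EuclideanSpace ℝ (Fin n)))
    (hΩ : IsOpen Ω) (hO : IsOpen O) (hne : O.Nonempty)
    (hOc : IsCompact (closure O)) (hOΩ : closure O ⊆ Ω)
    (H : EuclideanSpace ℝ (Fin n) → EuclideanSpace ℝ (Fin N) →
      (EuclideanSpace ℝ (Fin n) →L[ℝ] EuclideanSpace ℝ (Fin N)) → ℝ)
    (hH : ContDiff ℝ 1 fun p : EuclideanSpace ℝ (Fin n) × EuclideanSpace ℝ (Fin N) ×
      (EuclideanSpace ℝ (Fin n) →L[ℝ] EuclideanSpace ℝ (Fin N)) => H p.1 p.2.1 p.2.2)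
    (u : EuclideanSpace ℝ (Fin n) → EuclideanSpace ℝ (Fin N)) (hu : ContDiff ℝ 1 u)
    (hmin : ∀ ψ : EuclideanSpace ℝ (Fin n) → EuclideanSpace ℝ (Fin N),
      ContDiff ℝ 1 ψ → (∀ x ∈ frontier O, ψ x = 0) →
      Einf H O u ≤ Einf H O fun x => u x + ψ x) :
    ∀ ψ : EuclideanSpace ℝ (Fin n) → EuclideanSpace ℝ (Fin N),
      ContDiff ℝ 1 ψ → (∀ x ∈ frontier O, ψ x = 0) →
      0 ≤ sSup (firstVar H u ψ '' argmaxSet (fun x => H x (u x) (fderiv ℝ u x)) O) := by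
  intro ψ hψ hψ0
  by_contra hneg
  push_neg at hneg
  classical
  -- basic differentiability / continuity facts
  set fullH : EuclideanSpace ℝ (Fin n) × EuclideanSpace ℝ (Fin N) ×
      (EuclideanSpace ℝ (Fin n) →L[ℝ] EuclideanSpace ℝ (Fin N)) → ℝ :=
    fun p => H p.1 p.2.1 p.2.2 with hfullH
  have hHd : Differentiable ℝ fullH := hH.differentiable one_ne_zero
  have hDH : Continuous (fderiv ℝ fullH) := hH.continuous_fderiv one_ne_zero
  set F : ℝ × EuclideanSpace ℝ (Fin n) → ℝ := fun p =>
    (fderiv ℝ fullH (p.2, u p.2 + p.1 • ψ p.2, fderiv ℝ u p.2 + p.1 • fderiv ℝ ψ p.2))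
      (0, ψ p.2, fderiv ℝ ψ p.2) with hFdef
  have hucont : Continuous u := hu.continuous
  have hpcont : Continuous ψ := hψ.continuous
  have hu1 : Differentiable ℝ u := hu.differentiable one_ne_zero
  have hψ1 : Differentiable ℝ ψ := hψ.differentiable one_ne_zero
  have hDu : Continuous (fderiv ℝ u) := hu.continuous_fderiv one_ne_zero
  have hDψ : Continuous (fderiv ℝ ψ) := hψ.continuous_fderiv one_ne_zero
  have hFc : Continuous F := by
    apply Continuous.clm_apply
    · exact hDH.comp (by fun_prop)
    · fun_prop
  have hpart : ∀ (x : EuclideanSpace ℝ (Fin n))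
      (q : EuclideanSpace ℝ (Fin N) × (EuclideanSpace ℝ (Fin n) →L[ℝ] EuclideanSpace ℝ (Fin N))),
      HasFDerivAt (fun q : EuclideanSpace ℝ (Fin N) ×
          (EuclideanSpace ℝ (Fin n) →L[ℝ] EuclideanSpace ℝ (Fin N)) => H x q.1 q.2)
        ((fderiv ℝ fullH (x, q)).comp (inr ℝ _ _)) q := by
    intro x q
    exact (hHd (x, q)).hasFDerivAt.comp q (hasFDerivAt_prodMk_right x q)
  have key : ∀ (t : ℝ) (x : EuclideanSpace ℝ (Fin n)),
      HasDerivAt (fun s => H x (u x + s • ψ x) (fderiv ℝ u x + s • fderiv ℝ ψ x)) (F (t, x)) t := by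
    intro t x
    have hc : HasDerivAt
        (fun s : ℝ => ((u x + s • ψ x, fderiv ℝ u x + s • fderiv ℝ ψ x) :
          EuclideanSpace ℝ (Fin N) × (EuclideanSpace ℝ (Fin n) →L[ℝ] EuclideanSpace ℝ (Fin N))))
        (ψ x, fderiv ℝ ψ x) t := by
      apply HasDerivAt.prodMk
      · simpa using ((hasDerivAt_id t).smul_const (ψ x)).const_add (u x)
      · simpa using ((hasDerivAt_id t).smul_const (fderiv ℝ ψ x)).const_add (fderiv ℝ u x)
    have := (hpart x _).comp_hasDerivAt t hc
    simpa [F, Function.comp_def] using this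
  have hF0 : ∀ x, firstVar H u ψ x = F (0, x) := by
    intro x
    rw [firstVar, (hpart x (u x, fderiv ℝ u x)).fderiv]
    simp [F, zero_smul ℝ (fderiv ℝ ψ x)]
  set φ : EuclideanSpace ℝ (Fin n) → ℝ := firstVar H u ψ with hφdef
  have hφc : Continuous φ := by
    have : φ = fun x => F (0, x) := funext hF0
    rw [this]
    exact hFc.comp (continuous_const.prodMk continuous_id)
  set h : EuclideanSpace ℝ (Fin n) → ℝ := fun x => H x (u x) (fderiv ℝ u x) with hhdef
  have hhc : Continuous h := by
    have : h = fun x => fullH (x, u x, fderiv ℝ u x) := rfl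
    rw [this]
    exact hH.continuous.comp (continuous_id.prodMk (hucont.prodMk hDu))
  have hclne : (closure O).Nonempty := hne.closure
  -- the maximum M of h on closure O
  obtain ⟨x₀, hx₀, hx₀max⟩ := hOc.exists_isMaxOn hclne hhc.continuousOn
  set M : ℝ := h x₀ with hMdef
  have hMeq : Einf H O u = M := by
    apply IsGreatest.csSup_eq
    exact ⟨mem_image_of_mem _ hx₀, by rintro _ ⟨y, hy, rfl⟩; exact hx₀max hy⟩
  have hx₀K : x₀ ∈ argmaxSet h O := ⟨hx₀, fun y hy => hx₀max hy⟩
  -- the sup s of φ over the argmax set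
  set K : Set (EuclideanSpace ℝ (Fin n)) := argmaxSet h O with hKdef
  set s : ℝ := sSup (φ '' K) with hsdef
  have hKsub : K ⊆ closure O := fun x hx => hx.1
  have hbddK : BddAbove (φ '' K) :=
    ((hOc.image hφc).bddAbove).mono (image_mono hKsub)
  have hsneg : s < 0 := hneg
  have hφles : ∀ x ∈ K, φ x ≤ s := fun x hx => le_csSup hbddK (mem_image_of_mem _ hx)
  -- the open neighborhood U of K
  set U : Set (EuclideanSpace ℝ (Fin n)) := {x | φ x < s / 2} with hUdef
  have hUopen : IsOpen U := isOpen_lt hφc continuous_const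
  have hKU : K ⊆ U := fun x hx => lt_of_le_of_lt (hφles x hx) (by linarith)
  -- the compact set C = closure O \ U, where h is strictly below M
  set C : Set (EuclideanSpace ℝ (Fin n)) := closure O \ U with hCdef
  have hCc : IsCompact C := hOc.diff hUopen
  obtain ⟨ε, hεpos, hCbound⟩ : ∃ ε : ℝ, 0 < ε ∧ ∀ x ∈ C, h x ≤ M - ε := by
    rcases C.eq_empty_or_nonempty with hCe | hCne
    · exact ⟨1, one_pos, by simp [hCe]⟩
    · obtain ⟨x₁, hx₁C, hx₁max⟩ := hCc.exists_isMaxOn hCne hhc.continuousOn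
      have hx₁cl : x₁ ∈ closure O := hx₁C.1
      have hx₁K : x₁ ∉ K := fun hk => hx₁C.2 (hKU hk)
      have : ¬ ∀ y ∈ closure O, h y ≤ h x₁ := fun hall => hx₁K ⟨hx₁cl, hall⟩
      push_neg at this
      obtain ⟨y, hy, hylt⟩ := this
      have hx₁lt : h x₁ < M := lt_of_lt_of_le hylt (hx₀max hy)
      refine ⟨M - h x₁, by linarith, fun x hx => ?_⟩
      have hxle : h x ≤ h x₁ := hx₁max hx
      linarith
  -- bound B on φ over closure O
  obtain ⟨x₂, _, hx₂max⟩ := hOc.exists_isMaxOn hclne hφc.continuousOn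
  set B : ℝ := φ x₂ with hBdef
  have hφleB : ∀ x ∈ closure O, φ x ≤ B := fun x hx => hx₂max hx
  -- uniform continuity of F on [0,1] × closure O
  set εu : ℝ := -s / 4 with hεudef
  have hεupos : 0 < εu := by rw [hεudef]; linarith
  obtain ⟨δ, hδpos, hδ⟩ : ∃ δ > 0, ∀ t ∈ Icc (0:ℝ) 1, |t| < δ → ∀ x ∈ closure O,
      F (t, x) ≤ F (0, x) + εu := by
    have hScomp : IsCompact (Icc (0:ℝ) 1 ×ˢ closure O) := isCompact_Icc.prod hOc
    have huc := hScomp.uniformContinuousOn_of_continuous hFc.continuousOn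
    rw [Metric.uniformContinuousOn_iff] at huc
    obtain ⟨δ, hδpos, hδ⟩ := huc εu hεupos
    refine ⟨δ, hδpos, fun t ht hlt x hx => ?_⟩
    have h1 : ((t, x) : ℝ × EuclideanSpace ℝ (Fin n)) ∈ Icc (0:ℝ) 1 ×ˢ closure O := ⟨ht, hx⟩
    have h2 : ((0, x) : ℝ × EuclideanSpace ℝ (Fin n)) ∈ Icc (0:ℝ) 1 ×ˢ closure O :=
      ⟨⟨le_refl 0, zero_le_one⟩, hx⟩
    have hdist : dist ((t, x) : ℝ × EuclideanSpace ℝ (Fin n)) (0, x) < δ := by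
      rw [Prod.dist_eq]
      simp only [dist_self]
      rw [max_eq_left dist_nonneg, Real.dist_eq, sub_zero]
      exact hlt
    have := hδ _ h1 _ h2 hdist
    rw [Real.dist_eq] at this
    have := le_of_lt (lt_of_le_of_lt (le_abs_self _) this)
    linarith
  -- choose t
  set D : ℝ := max (B + εu) 1 with hDdef
  have hDpos : 0 < D := lt_of_lt_of_le one_pos (le_max_right _ _)
  set t : ℝ := min (δ / 2) (min 1 (ε / (2 * D))) with htdef
  have htpos : 0 < t := by
    apply lt_min (by linarith)
    exact lt_min one_pos (div_pos hεpos (by linarith))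
  have ht1 : t ≤ 1 := le_trans (min_le_right _ _) (min_le_left _ _)
  have htδ : t < δ := lt_of_le_of_lt (min_le_left _ _) (by linarith)
  have htε : t * D ≤ ε / 2 := by
    have h1 : t ≤ ε / (2 * D) := le_trans (min_le_right _ _) (min_le_right _ _)
    calc t * D ≤ (ε / (2 * D)) * D := by nlinarith
    _ = ε / 2 := by field_simp
  -- the key pointwise estimate
  have hpoint : ∀ x ∈ closure O,
      H x (u x + t • ψ x) (fderiv ℝ u x + t • fderiv ℝ ψ x) ≤ h x + t * (φ x + εu) := by
    intro x hx
    set g : ℝ → ℝ := fun s => H x (u x + s • ψ x) (fderiv ℝ u x + s • fderiv ℝ ψ x) with hgdef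
    obtain ⟨c, hc, hceq⟩ := exists_hasDerivAt_eq_slope g (fun s => F (s, x)) htpos
      (fun s _ => (key s x).continuousAt.continuousWithinAt)
      (fun s _ => key s x)
    have hg0 : g 0 = h x := by simp [hgdef, hhdef, zero_smul ℝ (fderiv ℝ ψ x)]
    have ht0 : (t : ℝ) ≠ 0 := ne_of_gt htpos
    have hgt : g t = g 0 + t * F (c, x) := by
      rw [hceq]
      field_simp
      ring
    have hcmem : c ∈ Icc (0:ℝ) 1 := ⟨le_of_lt hc.1, le_trans (le_of_lt hc.2) ht1⟩
    have hcabs : |c| < δ := by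
      rw [abs_of_pos hc.1]; exact lt_trans hc.2 htδ
    have hFbound : F (c, x) ≤ φ x + εu := by
      have := hδ c hcmem hcabs x hx
      rw [hF0 x]; linarith
    have : g t ≤ h x + t * (φ x + εu) := by
      rw [hgt, hg0]
      have := mul_le_mul_of_nonneg_left hFbound (le_of_lt htpos)
      linarith
    exact this
  -- Einf of the perturbed function
  have hDsum : ∀ x, fderiv ℝ (fun y => u y + t • ψ y) x = fderiv ℝ u x + t • fderiv ℝ ψ x := by
    intro x
    exact ((hu1 x).hasFDerivAt.add ((hψ1 x).hasFDerivAt.const_smul t)).fderiv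
  set m : ℝ := min (t * εu) (ε / 2) with hmdef
  have hmpos : 0 < m := lt_min (mul_pos htpos hεupos) (by linarith)
  have hEbound : Einf H O (fun x => u x + t • ψ x) ≤ M - m := by
    rw [Einf]
    apply csSup_le (hclne.image _)
    rintro _ ⟨x, hx, rfl⟩
    simp only
    rw [hDsum x]
    have hb := hpoint x hx
    rcases Classical.em (x ∈ U) with hxU | hxU
    · -- φ x < s/2, h x ≤ M
      have h1 : φ x < s / 2 := hxU
      have h2 : h x ≤ M := hx₀max hx
      have h3 : φ x + εu ≤ -εu := by rw [hεudef]; linarith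
      have h4 : t * (φ x + εu) ≤ t * (-εu) :=
        mul_le_mul_of_nonneg_left h3 (le_of_lt htpos)
      have hm1 : m ≤ t * εu := min_le_left _ _
      nlinarith
    · -- x ∈ C
      have hxC : x ∈ C := ⟨hx, hxU⟩
      have h1 : h x ≤ M - ε := hCbound x hxC
      have h2 : φ x + εu ≤ B + εu := by linarith [hφleB x hx]
      have h3 : t * (φ x + εu) ≤ t * D := by
        apply mul_le_mul_of_nonneg_left _ (le_of_lt htpos)
        exact le_trans h2 (le_max_left _ _)
      have hm2 : m ≤ ε / 2 := min_le_right _ _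
      linarith
  -- contradiction with hmin
  have hmin' := hmin (fun x => t • ψ x) (hψ.const_smul t)
    (fun x hx => by show t • ψ x = 0; rw [hψ0 x hx, smul_zero])
  rw [hMeq] at hmin'
  have := le_trans hmin' hEbound
  linarith
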